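/- arXiv:0705.2124 — 6 statements merged into one kernel-verified Lean document; each statement's English description precedes it below -/
import Mathlib

section
/- Let $n \ge 1$, $A > 0$, and real numbers $F, F', F'', x$ with $x \ge 0$. Set $C = F'^2 x - (F'' x + F')A$ and let $z_0 \in \mathbb{C}$ with $|z_0|^2 = x$, and $z_1,\dots,z_{n-1} \in \mathbb{C}$. Consider the $n \times n$ Hermitian matrix $h$ with entries $h_{00} = C/A^2$, $h_{0\beta} = -F' \bar z_0 z_\beta / A^2$ for $\beta \ge 1$, and $h_{\alpha\beta} = (\delta_{\alpha\beta} A + \bar z_\alpha z_\beta)/A^2$ for $\alpha,\beta \ge 1$. Then $\det(h) = \frac{1}{A^{n+2}}\big[ CA + (C - F'^2 x)(|z_1|^2 + \cdots + |z_{n-1}|^2) \big]$. -/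
/-!
Up to the factor `A⁻²`, the matrix `h` is `diag (C - F'² x, A, …, A) + w̄ wᵀ` with
`w = (-F' z₀, z₁, …, z_{n-1})`, since `F'² |z₀|² = F'² x`. The determinant of a diagonal matrix
plus a rank-one matrix is given by the matrix determinant lemma in adjugate form,
`det (M + u vᵀ) = det M + vᵀ (adj M) u`, which is needed here for a possibly singular `M`
(`C - F'² x` may vanish). It follows from the invertible case by passing to `X + M` over `R[X]`,
whose determinant is monic and hence invertible in the fraction field.
-/

open Matrix Finset

namespace Matrix

variable {n R S : Type*} [Fintype n] [DecidableEq n]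

theorem det_add_vecMulVec_of_isUnit [CommRing R] {M : Matrix n n R} (hM : IsUnit M.det)
    (u v : n → R) : (M + vecMulVec u v).det = M.det + v ⬝ᵥ (M.adjugate *ᵥ u) := by
  rw [vecMulVec_eq Unit, det_add_replicateCol_mul_replicateRow hM, Matrix.mul_assoc,
    ← replicateCol_mulVec, det_unique (1 + _), add_apply, one_apply_eq,
    replicateRow_mul_replicateCol_apply, inv_def, smul_mulVec, dotProduct_smul, smul_eq_mul,
    mul_add, mul_one, ← mul_assoc, Ring.mul_inverse_cancel _ hM, one_mul]

theorem map_det_add_vecMulVec [CommRing R] [CommRing S] (f : R →+* S) (M : Matrix n n R)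
    (u v : n → R) :
    f (M + vecMulVec u v).det = (M.map f + vecMulVec (f ∘ u) (f ∘ v)).det := by
  rw [RingHom.map_det]
  congr 1
  ext i j
  simp [vecMulVec_apply]

theorem map_dotProduct_adjugate_mulVec [CommRing R] [CommRing S] (f : R →+* S)
    (M : Matrix n n R) (u v : n → R) :
    f (v ⬝ᵥ (M.adjugate *ᵥ u)) = (f ∘ v) ⬝ᵥ ((M.map f).adjugate *ᵥ (f ∘ u)) := by
  rw [RingHom.map_dotProduct]
  congr 1
  ext i
  rw [Function.comp_apply, RingHom.map_mulVec, ← RingHom.mapMatrix_apply, RingHom.map_adjugate,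
    RingHom.mapMatrix_apply]

open Polynomial in
theorem det_add_vecMulVec [CommRing R] [IsDomain R] (M : Matrix n n R) (u v : n → R) :
    (M + vecMulVec u v).det = M.det + v ⬝ᵥ (M.adjugate *ᵥ u) := by
  let ι : R[X] →+* FractionRing R[X] := algebraMap _ _
  have hι : Function.Injective ι := IsFractionRing.injective _ _
  set N : Matrix n n R[X] := charmatrix (-M)
  have hN : IsUnit (N.map ι).det := by
    rw [← RingHom.mapMatrix_apply, ← RingHom.map_det]
    exact (map_ne_zero_iff ι hι |>.mpr (charpoly_monic (-M)).ne_zero).isUnit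
  have hN_generic : (N + vecMulVec (C ∘ u) (C ∘ v)).det
      = N.det + (C ∘ v) ⬝ᵥ (N.adjugate *ᵥ (C ∘ u)) := by
    apply hι
    rw [map_add, map_det_add_vecMulVec, map_dotProduct_adjugate_mulVec, RingHom.map_det]
    exact det_add_vecMulVec_of_isUnit hN _ _
  have hN_eval : N.map (evalRingHom 0) = M := by
    ext i j
    by_cases h : i = j <;> simp [N, h]
  have hC_eval (w : n → R) : evalRingHom 0 ∘ C ∘ w = w := funext fun _ => eval_C
  have := congrArg (evalRingHom 0) hN_generic
  rwa [map_add, map_det_add_vecMulVec, map_dotProduct_adjugate_mulVec, RingHom.map_det,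
    RingHom.mapMatrix_apply, hN_eval, hC_eval, hC_eval] at this

theorem det_diagonal_add_vecMulVec [CommRing R] [IsDomain R] (d u v : n → R) :
    (diagonal d + vecMulVec u v).det = ∏ i, d i + ∑ i, v i * u i * ∏ j ∈ univ.erase i, d j := by
  simp only [det_add_vecMulVec, det_diagonal, adjugate_diagonal, mulVec_diagonal, dotProduct,
    mul_left_comm, mul_comm]

theorem det_diagonal_update_add_vecMulVec {K : Type*} [Field K] (i₀ : n) {a : K} (ha : a ≠ 0)
    (b : K) (u v : n → K) :
    (diagonal (Function.update (fun _ => a) i₀ b) + vecMulVec u v).det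
      = a ^ (Fintype.card n - 1) * (b + v i₀ * u i₀ + b / a * ∑ i ∈ univ.erase i₀, v i * u i) := by
  set d := Function.update (fun _ => a) i₀ b
  have hd_ne {j : n} (hj : j ≠ i₀) : d j = a := Function.update_of_ne hj _ _
  have hprod_erase : ∏ j ∈ univ.erase i₀, d j = a ^ (Fintype.card n - 1) := by
    rw [prod_congr rfl fun j hj => hd_ne (ne_of_mem_erase hj), prod_const,
      card_erase_of_mem (mem_univ _), card_univ]
  have hprod : ∏ j, d j = b * a ^ (Fintype.card n - 1) := by
    rw [← mul_prod_erase _ _ (mem_univ i₀), hprod_erase]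
    simp [d]
  have hprod_erase_ne {i : n} (hi : i ≠ i₀) : ∏ j ∈ univ.erase i, d j = (∏ j, d j) / a := by
    rw [← mul_prod_erase _ _ (mem_univ i), hd_ne hi, mul_div_cancel_left₀ _ ha]
  rw [det_diagonal_add_vecMulVec, ← add_sum_erase _ _ (mem_univ i₀), hprod_erase,
    sum_congr rfl fun i hi => by rw [hprod_erase_ne (ne_of_mem_erase hi)], ← sum_mul, hprod]
  ring

end Matrix

noncomputable def hartogsHessian {n : ℕ} [NeZero n] (A C F' : ℝ) (z : Fin n → ℂ) : Matrix (Fin n) (Fin n) ℂ :=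
  Matrix.of fun a b : Fin n =>
    if a = 0 then
      (if b = 0 then (C : ℂ) / (A : ℂ) ^ 2
       else -(F' : ℂ) * (starRingEnd ℂ) (z 0) * z b / (A : ℂ) ^ 2)
    else if b = 0 then -(F' : ℂ) * z 0 * (starRingEnd ℂ) (z a) / (A : ℂ) ^ 2
    else ((if a = b then (A : ℂ) else 0) + (starRingEnd ℂ) (z a) * z b) / (A : ℂ) ^ 2

theorem hartogsHessian_eq_smul_diagonal_add_vecMulVec {n : ℕ} [NeZero n] (A x C F' : ℝ)
    (z : Fin n → ℂ) (hz0 : Complex.normSq (z 0) = x) :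
    hartogsHessian A C F' z = ((A : ℂ) ^ 2)⁻¹ •
      (diagonal (Function.update (fun _ => (A : ℂ)) 0 (C - F' ^ 2 * x))
        + vecMulVec (star (Function.update z 0 (-F' * z 0))) (Function.update z 0 (-F' * z 0))) := by
  have hzz : starRingEnd ℂ (z 0) * z 0 = x := by
    rw [← hz0, Complex.normSq_eq_conj_mul_self]
  ext i j
  simp only [hartogsHessian, of_apply, Matrix.smul_apply, Matrix.add_apply, diagonal_apply,
    vecMulVec_apply, Pi.star_apply, Complex.star_def, smul_eq_mul]
  rcases eq_or_ne i 0 with rfl | hi <;> rcases eq_or_ne j 0 with rfl | hj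
  · simp only [Function.update_self, if_true, map_mul, map_neg, Complex.conj_ofReal]
    linear_combination -(F' : ℂ) ^ 2 / (A : ℂ) ^ 2 * hzz
  · simp only [Function.update_self, Function.update_of_ne hj, if_true, if_neg hj, if_neg hj.symm,
      map_mul, map_neg, Complex.conj_ofReal]
    ring
  · simp only [Function.update_self, Function.update_of_ne hi, if_true, if_neg hi]
    ring
  · simp only [Function.update_of_ne hi, Function.update_of_ne hj, if_neg hi, if_neg hj]
    ring

theorem stmt_1_general (n : ℕ) [NeZero n] (A x F' C : ℝ) (hA : 0 < A)
    (z : Fin n → ℂ) (hz0 : Complex.normSq (z 0) = x) :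
    (Matrix.of fun a b : Fin n =>
        if a = 0 then
          (if b = 0 then (C : ℂ) / (A : ℂ) ^ 2
           else -(F' : ℂ) * (starRingEnd ℂ) (z 0) * z b / (A : ℂ) ^ 2)
        else if b = 0 then -(F' : ℂ) * z 0 * (starRingEnd ℂ) (z a) / (A : ℂ) ^ 2
        else ((if a = b then (A : ℂ) else 0) + (starRingEnd ℂ) (z a) * z b) / (A : ℂ) ^ 2).det
      = ((1 / A ^ (n + 2) *
          (C * A + (C - F' ^ 2 * x) * ∑ k ∈ Finset.univ.erase 0, Complex.normSq (z k)) : ℝ) : ℂ) := by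
  set w := Function.update z 0 (-F' * z 0)
  have hw0 : w 0 * star w 0 = F' ^ 2 * x := by
    simp only [w, Function.update_self, Pi.star_apply, Complex.star_def, map_mul, map_neg,
      Complex.conj_ofReal, ← hz0, Complex.normSq_eq_conj_mul_self]
    ring
  have hw {i : Fin n} (hi : i ∈ univ.erase 0) : w i * star w i = Complex.normSq (z i) := by
    simp [w, ne_of_mem_erase hi, Complex.mul_conj]
  have hA' : (A : ℂ) ≠ 0 := Complex.ofReal_ne_zero.mpr hA.ne'
  change (hartogsHessian A C F' z).det = _
  rw [hartogsHessian_eq_smul_diagonal_add_vecMulVec A x C F' z hz0, det_smul,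
    det_diagonal_update_add_vecMulVec 0 hA', hw0, sum_congr rfl fun i hi => hw hi,
    Fintype.card_fin, inv_pow, ← pow_mul]
  obtain ⟨m, rfl⟩ := Nat.exists_eq_add_one_of_ne_zero (NeZero.ne n)
  push_cast
  field_simp
  ring

/-- Laplace-expansion determinant formula for the complex Hessian
matrix `h` of the Hartogs potential:
`det h = (1/A^(n+2)) [CA + (C - F'^2 x)(|z_1|^2 + ⋯ + |z_{n-1}|^2)]`. -/
theorem stmt_1 (n : ℕ) [NeZero n] (A x F F' F'' C : ℝ) (hA : 0 < A) (hx : 0 ≤ x)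
    (hC : C = F' ^ 2 * x - (F'' * x + F') * A)
    (z : Fin n → ℂ) (hz0 : Complex.normSq (z 0) = x) :
    (Matrix.of fun a b : Fin n =>
        if a = 0 then
          (if b = 0 then (C : ℂ) / (A : ℂ) ^ 2
           else -(F' : ℂ) * (starRingEnd ℂ) (z 0) * z b / (A : ℂ) ^ 2)
        else if b = 0 then -(F' : ℂ) * z 0 * (starRingEnd ℂ) (z a) / (A : ℂ) ^ 2
        else ((if a = b then (A : ℂ) else 0) + (starRingEnd ℂ) (z a) * z b) / (A : ℂ) ^ 2).det
      = ((1 / A ^ (n + 2) *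
          (C * A + (C - F' ^ 2 * x) * ∑ k ∈ Finset.univ.erase 0, Complex.normSq (z k)) : ℝ) : ℂ) :=
  stmt_1_general n A x F' C hA z hz0
end

section
/- Let $F$ be smooth, decreasing and positive on an interval containing $x = |z_0|^2 > 0$, and suppose $(x F'/F)' < 0$ at $x$. Let $z = (z_0,\dots,z_{n-1})$ satisfy $|z_1|^2 + \cdots + |z_{n-1}|^2 = F(|z_0|^2)$. Then for every nonzero $(X_1,\dots,X_{n-1}) \in \mathbb{C}^{n-1}$, $L(X) := |X_1|^2 + \cdots + |X_{n-1}|^2 - \frac{F'(x) + F''(x)x}{F'(x)^2 x}\,|\bar z_1 X_1 + \cdots + \bar z_{n-1} X_{n-1}|^2 > 0$. -/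
/-- positivity of the restricted Levi form at boundary points with
`z₀ ≠ 0`, assuming the Kähler condition `(xF'/F)' < 0`. -/
theorem stmt_4 (n : ℕ) (hn : 2 ≤ n) (a b x : ℝ) (hx : 0 < x) (hmem : x ∈ Set.Ioo a b)
    (F : ℝ → ℝ) (hFs : ContDiffOn ℝ (⊤ : ℕ∞) F (Set.Ioo a b))
    (hFpos : ∀ t ∈ Set.Ioo a b, 0 < F t) (hFdec : AntitoneOn F (Set.Ioo a b))
    (hk : deriv (fun t => t * deriv F t / F t) x < 0)
    (z X : Fin (n - 1) → ℂ)
    (hz : ∑ k, Complex.normSq (z k) = F x) (hX : X ≠ 0) :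
    0 < ∑ k, Complex.normSq (X k) -
        (deriv F x + deriv (deriv F) x * x) / ((deriv F x) ^ 2 * x) *
          Complex.normSq (∑ k, (starRingEnd ℂ) (z k) * X k) := by
  obtain ⟨k0, hk0⟩ : ∃ k, X k ≠ 0 := by
    by_contra h; push_neg at h; exact hX (funext h)
  have hf : 0 < F x := hFpos x hmem
  set s := ∑ k, Complex.normSq (X k) with hs_def
  set p := Complex.normSq (∑ k, (starRingEnd ℂ) (z k) * X k) with hp_def
  have hs : 0 < s :=
    Finset.sum_pos' (fun i _ => Complex.normSq_nonneg _)
      ⟨k0, Finset.mem_univ _, Complex.normSq_pos.2 hk0⟩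
  have hp0 : 0 ≤ p := Complex.normSq_nonneg _
  -- Cauchy–Schwarz: p ≤ F x * s
  have hCS : p ≤ F x * s := by
    have h1 : ‖∑ k, (starRingEnd ℂ) (z k) * X k‖ ≤
        ∑ k, ‖z k‖ * ‖X k‖ := by
      refine (norm_sum_le _ _).trans_eq ?_
      refine Finset.sum_congr rfl fun k _ => ?_
      simp [map_mul]
    have h2 : (∑ k, ‖z k‖ * ‖X k‖) ^ 2 ≤
        (∑ k, ‖z k‖ ^ 2) * ∑ k, ‖X k‖ ^ 2 :=
      Finset.sum_mul_sq_le_sq_mul_sq _ _ _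
    have h3 : p = ‖∑ k, (starRingEnd ℂ) (z k) * X k‖ ^ 2 :=
      (Complex.sq_norm _).symm
    have h4 : (∑ k, ‖z k‖ ^ 2) = F x := by
      rw [← hz]; exact Finset.sum_congr rfl fun k _ => Complex.sq_norm _
    have h5 : (∑ k, ‖X k‖ ^ 2) = s := by
      rw [hs_def]; exact Finset.sum_congr rfl fun k _ => Complex.sq_norm _
    calc p = ‖∑ k, (starRingEnd ℂ) (z k) * X k‖ ^ 2 := h3
      _ ≤ (∑ k, ‖z k‖ * ‖X k‖) ^ 2 := by
          apply pow_le_pow_left₀ (norm_nonneg _) h1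
      _ ≤ (∑ k, ‖z k‖ ^ 2) * ∑ k, ‖X k‖ ^ 2 := h2
      _ = F x * s := by rw [h4, h5]
  -- derivative computation
  have hnhds : Set.Ioo a b ∈ nhds x := isOpen_Ioo.mem_nhds hmem
  have hF1 : HasDerivAt F (deriv F x) x :=
    ((hFs.contDiffAt hnhds).differentiableAt (by simp)).hasDerivAt
  have hdF : ContDiffOn ℝ (⊤ : ℕ∞) (deriv F) (Set.Ioo a b) :=
    hFs.deriv_of_isOpen isOpen_Ioo (by simp)
  have hF2 : HasDerivAt (deriv F) (deriv (deriv F) x) x :=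
    ((hdF.contDiffAt hnhds).differentiableAt (by simp)).hasDerivAt
  have hu : HasDerivAt (fun t => t * deriv F t)
      (1 * deriv F x + x * deriv (deriv F) x) x := (hasDerivAt_id x).mul hF2
  have hg : HasDerivAt (fun t => t * deriv F t / F t)
      (((1 * deriv F x + x * deriv (deriv F) x) * F x - x * deriv F x * deriv F x) / F x ^ 2)
      x := hu.div hF1 (ne_of_gt hf)
  rw [hg.deriv] at hk
  have hnum : (1 * deriv F x + x * deriv (deriv F) x) * F x - x * deriv F x * deriv F x < 0 := by
    have h2 : (0:ℝ) < F x ^ 2 := pow_pos hf 2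
    by_contra h
    push_neg at h
    exact absurd (div_nonneg h h2.le) (not_le.2 hk)
  set d := deriv F x
  set d2 := deriv (deriv F) x
  by_cases hd : d = 0
  · simp only [hd, ne_eq, zero_pow, pow_eq_zero_iff, OfNat.ofNat_ne_zero, not_false_eq_true,
      zero_mul, div_zero]
    simpa using hs
  · have hpos : 0 < d ^ 2 * x := mul_pos (by positivity) hx
    have hC : (d + d2 * x) / (d ^ 2 * x) < 1 / F x := by
      rw [div_lt_div_iff₀ hpos hf]
      nlinarith [hnum]
    rcases hp0.eq_or_lt with hp | hp
    · rw [← hp, mul_zero]; simpa using hs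
    · have h1 : (d + d2 * x) / (d ^ 2 * x) * p < (1 / F x) * p :=
        mul_lt_mul_of_pos_right hC hp
      have h2 : (1 / F x) * p ≤ s := by
        rw [one_div, inv_mul_le_iff₀ hf]
        linarith [hCS]
      linarith
end

section
/- Let $F$ be smooth, decreasing and positive, $x = |z_0|^2 > 0$, and let $z = (z_0,\dots,z_{n-1})$ satisfy $|z_1|^2 + \cdots + |z_{n-1}|^2 = F(x)$ with $(z_1,\dots,z_{n-1}) \neq 0$. If for every nonzero $(X_1,\dots,X_{n-1})$ one has $|X_1|^2 + \cdots + |X_{n-1}|^2 - \frac{F'(x) + F''(x)x}{F'(x)^2 x}|\bar z_1 X_1 + \cdots + \bar z_{n-1} X_{n-1}|^2 > 0$, then $\frac{d}{dx}\left(\frac{x F'(x)}{F(x)}\right) < 0$ at $x$. -/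
/-- converse direction: if the restricted Levi form at a boundary
point with `z₀ ≠ 0`, `(z_1,…,z_{n-1}) ≠ 0` is positive on all nonzero vectors,
then `(xF'/F)' < 0` at `x = |z₀|²`. -/
theorem stmt_5 (n : ℕ) (hn : 2 ≤ n) (a b x : ℝ) (hx : 0 < x) (hmem : x ∈ Set.Ioo a b)
    (F : ℝ → ℝ) (hFs : ContDiffOn ℝ (⊤ : ℕ∞) F (Set.Ioo a b))
    (hFpos : ∀ t ∈ Set.Ioo a b, 0 < F t) (hFdec : AntitoneOn F (Set.Ioo a b))
    (hF' : deriv F x ≠ 0)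
    (z : Fin (n - 1) → ℂ) (hz : ∑ k, Complex.normSq (z k) = F x) (hzne : z ≠ 0)
    (hLevi : ∀ X : Fin (n - 1) → ℂ, X ≠ 0 →
      0 < ∑ k, Complex.normSq (X k) -
          (deriv F x + deriv (deriv F) x * x) / ((deriv F x) ^ 2 * x) *
            Complex.normSq (∑ k, (starRingEnd ℂ) (z k) * X k)) :
    deriv (fun t => t * deriv F t / F t) x < 0 := by
  obtain ⟨hax, hxb⟩ := hmem
  have hxs : x ∈ Set.Ioo a b := ⟨hax, hxb⟩
  have hFx : 0 < F x := hFpos x hxs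
  have hnhds : Set.Ioo a b ∈ nhds x := isOpen_Ioo.mem_nhds hxs
  -- Levi form evaluated at X = z
  have key := hLevi z hzne
  have hsum : (∑ k, (starRingEnd ℂ) (z k) * z k) = (F x : ℂ) := by
    rw [← hz]
    push_cast
    refine Finset.sum_congr rfl fun k _ => ?_
    rw [← Complex.normSq_eq_conj_mul_self]
  rw [hz, hsum] at key
  have hns : Complex.normSq ((F x : ℂ)) = F x * F x := Complex.normSq_ofReal (F x)
  rw [hns] at key
  set F' := deriv F x with hF'def
  set F'' := deriv (deriv F) x with hF''def
  have hF'2x : 0 < F' ^ 2 * x := by positivity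
  -- key : 0 < F x - (F' + F'' * x) / (F' ^ 2 * x) * (F x * F x)
  have hineq : (F' + F'' * x) * F x < F' ^ 2 * x := by
    have h1 : (F' + F'' * x) / (F' ^ 2 * x) * (F x * F x) < F x := by linarith
    have h2 : (F' + F'' * x) / (F' ^ 2 * x) * F x < 1 := by nlinarith [h1, hFx]
    have heq : (F' + F'' * x) * F x
        = (F' + F'' * x) / (F' ^ 2 * x) * F x * (F' ^ 2 * x) := by
      field_simp
    rw [heq]
    calc (F' + F'' * x) / (F' ^ 2 * x) * F x * (F' ^ 2 * x)
        < 1 * (F' ^ 2 * x) := mul_lt_mul_of_pos_right h2 hF'2x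
      _ = F' ^ 2 * x := one_mul _
  -- differentiability
  have hcF : ContDiffAt ℝ (⊤ : ℕ∞) F x := hFs.contDiffAt hnhds
  have hcF' : ContDiffOn ℝ (⊤ : ℕ∞) (deriv F) (Set.Ioo a b) :=
    hFs.deriv_of_isOpen isOpen_Ioo (by simp)
  have hdF : HasDerivAt F F' x := (hcF.differentiableAt (by simp)).hasDerivAt
  have hdF' : HasDerivAt (deriv F) F'' x :=
    (((hcF'.contDiffAt hnhds).differentiableAt (by simp))).hasDerivAt
  have hmul : HasDerivAt (fun t => t * deriv F t) (1 * F' + x * F'') x :=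
    (hasDerivAt_id x).mul hdF'
  have hdiv : HasDerivAt (fun t => t * deriv F t / F t)
      (((1 * F' + x * F'') * F x - x * F' * F') / F x ^ 2) x :=
    hmul.div hdF hFx.ne'
  rw [hdiv.deriv]
  apply div_neg_of_neg_of_pos _ (by positivity)
  nlinarith
end

section
/- With $A = F - |z_1|^2 - \cdots - |z_{n-1}|^2 > 0$, $x = |z_0|^2$, $B = F'^2 x - F(F' + F'' x) \neq 0$, define the $n \times n$ matrices $h$ (as in the Hartogs metric: $h_{00} = C/A^2$ with $C = F'^2 x - (F''x + F')A$, $h_{0\beta} = -F'\bar z_0 z_\beta/A^2$, $h_{\alpha 0} = -F' z_0 \bar z_\alpha / A^2$, $h_{\alpha\beta} = (\delta_{\alpha\beta}A + \bar z_\alpha z_\beta)/A^2$ for $\alpha,\beta \ge 1$) and $G$ with entries $G^{00} = \frac{A}{B}F$, $G^{\beta 0} = \frac{A}{B}F' z_0 \bar z_\beta$, $G^{0\alpha} = \frac{A}{B}F' \bar z_0 z_\alpha$, $G^{\beta\alpha} = \frac{A}{B}(F' + F''x) z_\alpha \bar z_\beta$ for $\alpha \neq \beta$, $G^{\beta\beta}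 = \frac{A}{B}[B + (F' + F''x)|z_\beta|^2]$ ($\alpha,\beta \ge 1$). Then $G$ is the inverse matrix of $h$. -/
/-!
Both `G` and `h` are bordered rank-one matrices: away from the index `0` they are
`d • 1 + e • (z̄ ⊗ z)`, and their border row and column are multiples of `z̄₀ z` and `z₀ z̄`.
Such matrices are closed under multiplication, the coefficients of a product being
polynomials in those of the factors, in `|z₀|²` and in `∑_{k ≠ 0} |z_k|² = F - A`.
With `M(p, r, c, d, e)` the matrix with corner `p`, border coefficients `r`, `c`, diagonal `d`
and rank-one coefficient `e`, we have `G = (A / B) • M(F, F', F', B, F' + F'' x)` and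
`h = A⁻² • M(C, -F', -F', A, 1)`, so the product is `(A / B) A⁻² • M(AB, 0, 0, AB, 0) = 1`:
each of the five coefficient identities follows from the definitions of `B` and `C`.
-/

open Finset

namespace Matrix

variable {ι R : Type*} [DecidableEq ι] [CommRing R] {o : ι} {u v : ι → R}

variable (o u v) in
def borderedRankOne (p r c d e : R) : Matrix ι ι R :=
  of fun i j =>
    if i = o then (if j = o then p else r * u o * v j)
    else if j = o then c * v o * u i
    else (if i = j then d else 0) + e * u i * v j

theorem borderedRankOne_one : borderedRankOne o u v 1 0 0 1 0 = 1 := by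
  ext i j
  rw [one_apply]
  by_cases hi : i = o <;> by_cases hj : i = j <;> simp_all [borderedRankOne, eq_comm]

theorem smul_borderedRankOne (k p r c d e : R) :
    k • borderedRankOne o u v p r c d e
      = borderedRankOne o u v (k * p) (k * r) (k * c) (k * d) (k * e) := by
  ext i j
  simp only [borderedRankOne, smul_apply, of_apply, smul_eq_mul]
  split_ifs <;> ring

theorem borderedRankOne_apply_of_ne_right {b : ι} (hb : b ≠ o) (i : ι) (p r c d e : R) :
    borderedRankOne o u v p r c d e i b
      = (if i = b then d else 0) + (if i = o then r else e) * u i * v b := by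
  by_cases hi : i = o
  · subst hi; simp [borderedRankOne, hb, hb.symm]
  · simp [borderedRankOne, hi, hb]

theorem borderedRankOne_apply_of_ne_left {b : ι} (hb : b ≠ o) (j : ι) (p r c d e : R) :
    borderedRankOne o u v p r c d e b j
      = (if b = j then d else 0) + (if j = o then c else e) * u b * v j := by
  by_cases hj : j = o
  · subst hj; simp [borderedRankOne, hb]; ring
  · simp [borderedRankOne, hj, hb]

variable [Fintype ι]

theorem sum_erase_ite_add_mul_ite_add (i j : ι) (d d' α β : R) :
    ∑ b ∈ univ.erase o,
        ((if i = b then d else 0) + α * u i * v b) * ((if b = j then d' else 0) + β * u b * v j)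
      = (if i ≠ o ∧ i = j then d * d' else 0) + (if i ≠ o then d * β * u i * v j else 0)
          + (if j ≠ o then α * d' * u i * v j else 0)
          + α * β * u i * v j * ∑ b ∈ univ.erase o, u b * v b := by
  simp only [add_mul, mul_add, sum_add_distrib, ite_mul, mul_ite, zero_mul, mul_zero,
    sum_ite_eq', mem_erase, mem_univ, and_true]
  rw [mul_sum, sum_congr rfl fun b _ => show α * u i * v b * (β * u b * v j)
    = α * β * u i * v j * (u b * v b) by ring]
  split_ifs <;> simp_all <;> ring

theorem borderedRankOne_mul {x S : R} (hx : u o * v o = x)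
    (hS : ∑ i ∈ univ.erase o, u i * v i = S) (p r c d e p' r' c' d' e' : R) :
    borderedRankOne o u v p r c d e * borderedRankOne o u v p' r' c' d' e'
      = borderedRankOne o u v (p * p' + r * c' * x * S) (p * r' + r * d' + r * e' * S)
          (c * p' + d * c' + e * c' * S) (d * d') (c * r' * x + d * e' + e * d' + e * e' * S) := by
  ext i j
  rw [mul_apply, ← add_sum_erase _ _ (mem_univ o), sum_congr rfl fun b hb => by
    rw [borderedRankOne_apply_of_ne_right (ne_of_mem_erase hb),
      borderedRankOne_apply_of_ne_left (ne_of_mem_erase hb)], sum_erase_ite_add_mul_ite_add, hS, ← hx]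
  by_cases hi : i = o <;> by_cases hj : j = o <;> simp [borderedRankOne, hi, hj] <;> ring

end Matrix

open Matrix in
/-- the matrix `G` with entries `g^{βᾱ}` (eqs. (11)-(14) of the
paper) is the inverse of the complex Hessian `h` of the Hartogs potential:
`G · h = 1`, whenever `A = F - Σ|z_k|² > 0` and `B = F'²x - F(F'+F''x) ≠ 0`. -/
theorem stmt_7 (n : ℕ) [NeZero n] (F F' F'' A B C : ℝ) (z : Fin n → ℂ)
    (hA : A = F - ∑ k ∈ Finset.univ.erase 0, Complex.normSq (z k)) (hApos : 0 < A)
    (hB : B = F' ^ 2 * Complex.normSq (z 0) - F * (F' + F'' * Complex.normSq (z 0)))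
    (hB0 : B ≠ 0)
    (hC : C = F' ^ 2 * Complex.normSq (z 0) - (F'' * Complex.normSq (z 0) + F') * A) :
    (Matrix.of fun β α : Fin n =>
        if β = 0 then
          (if α = 0 then ((A / B * F : ℝ) : ℂ)
           else ((A / B * F' : ℝ) : ℂ) * (starRingEnd ℂ) (z 0) * z α)
        else if α = 0 then ((A / B * F' : ℝ) : ℂ) * z 0 * (starRingEnd ℂ) (z β)
        else if β = α then
          ((A / B : ℝ) : ℂ) *
            ((B : ℂ) + ((F' + F'' * Complex.normSq (z 0) : ℝ) : ℂ) * (Complex.normSq (z β) : ℂ))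
        else ((A / B * (F' + F'' * Complex.normSq (z 0)) : ℝ) : ℂ) * z α * (starRingEnd ℂ) (z β)) *
      (Matrix.of fun a b : Fin n =>
        if a = 0 then
          (if b = 0 then (C : ℂ) / (A : ℂ) ^ 2
           else -(F' : ℂ) * (starRingEnd ℂ) (z 0) * z b / (A : ℂ) ^ 2)
        else if b = 0 then -(F' : ℂ) * z 0 * (starRingEnd ℂ) (z a) / (A : ℂ) ^ 2
        else ((if a = b then (A : ℂ) else 0) + (starRingEnd ℂ) (z a) * z b) / (A : ℂ) ^ 2)
      = 1 := by
  have hA0 : (A : ℂ) ≠ 0 := by exact_mod_cast hApos.ne'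
  set x : ℂ := (Complex.normSq (z 0) : ℂ) with hx
  set E : ℂ := F' + F'' * x
  set u : Fin n → ℂ := fun k => (starRingEnd ℂ) (z k)
  have hBx : (B : ℂ) = F' ^ 2 * x - F * E := by simp only [x, E]; exact_mod_cast hB
  have hCx : (C : ℂ) = F' ^ 2 * x - E * A := by simp only [x, E]; push_cast [hC]; ring
  have hS : ∑ k ∈ Finset.univ.erase 0, u k * z k = (F : ℂ) - A := by
    simp only [u, ← Complex.normSq_eq_conj_mul_self, hA]; push_cast; ring
  calc _ = (((A : ℂ) / B) • borderedRankOne 0 u z F F' F' B E) *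
        ((A : ℂ) ^ 2)⁻¹ • borderedRankOne 0 u z C (-F') (-F') A 1 := by
        congr 1 <;> rw [smul_borderedRankOne] <;> ext i j <;>
          simp only [borderedRankOne, of_apply, E, x, u] <;> split_ifs <;> (try subst j) <;>
          push_cast [Complex.normSq_eq_conj_mul_self] <;> ring
    _ = ((A : ℂ) / B * ((A : ℂ) ^ 2)⁻¹) • (borderedRankOne 0 u z F F' F' B E *
          borderedRankOne 0 u z C (-F') (-F') A 1) :=
        smul_mul_smul_comm _ _ _ _
    _ = ((A : ℂ) / B * ((A : ℂ) ^ 2)⁻¹) • borderedRankOne 0 u z (A * B) 0 0 (A * B) 0 := by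
        rw [borderedRankOne_mul (Complex.normSq_eq_conj_mul_self.symm.trans hx.symm) hS]
        congr 2
        · linear_combination F * hCx - A * hBx
        · ring
        · linear_combination F' * hCx - F' * hBx
        · ring
        · linear_combination hBx
    _ = 1 := by
        have hB0' : (B : ℂ) ≠ 0 := by exact_mod_cast hB0
        rw [smul_borderedRankOne, mul_zero,
          show (A : ℂ) / B * ((A : ℂ) ^ 2)⁻¹ * (A * B) = 1 by field_simp, borderedRankOne_one]
end

section
/- Let $F$ be smooth and positive on $(0,x_0)$ with $B(x) := F'(x)^2 x - F(x)(F'(x) + F''(x)x) > 0$. Define $L(x) = \frac{d}{dx}\left[x \frac{d}{dx} \log B(x)\right]$. Then the complex Hessian of $-\log \det(h)$, where $\det(h) = B \cdot A^{-(n+1)}$ with $A = F(|z_0|^2) - |z_1|^2 - \cdots - |z_{n-1}|^2$, has entries $\mathrm{Ric}_{0\bar 0} = -L(|z_0|^2) - (n+1) g_{0\bar 0}$ and $\mathrm{Ric}_{\alpha\bar\beta} = -(n+1) g_{\alpha\bar\beta}$ for $\alpha \ge 1$, where $g_{\alpha\bar\beta}$ are the entries of the complex Hessian of $-\log A$. 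-/
/-- Wirtinger derivative `∂/∂z_i` of `f : ℂⁿ → ℂ`, via the real Fréchet derivative. -/
noncomputable def wdz {n : ℕ} (i : Fin n) (f : (Fin n → ℂ) → ℂ) (z : Fin n → ℂ) : ℂ :=
  (1 / 2 : ℂ) * (fderiv ℝ f z (Pi.single i 1) - Complex.I * fderiv ℝ f z (Pi.single i Complex.I))

/-- Conjugate Wirtinger derivative `∂/∂z̄_i` of `f : ℂⁿ → ℂ`. -/
noncomputable def wdzbar {n : ℕ} (i : Fin n) (f : (Fin n → ℂ) → ℂ) (z : Fin n → ℂ) : ℂ :=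
  (1 / 2 : ℂ) * (fderiv ℝ f z (Pi.single i 1) + Complex.I * fderiv ℝ f z (Pi.single i Complex.I))

/-- Complex Hessian `(∂²f/∂z_α ∂z̄_β)_{α,β}` of a real-valued function on `ℂⁿ`. -/
noncomputable def cHessian {n : ℕ} (f : (Fin n → ℂ) → ℝ) (z : Fin n → ℂ) :
    Matrix (Fin n) (Fin n) ℂ :=
  Matrix.of fun α β => wdz α (fun w => wdzbar β (fun u => ((f u : ℝ) : ℂ)) w) z

/-- `A = F(|z₀|²) - |z₁|² - ⋯ - |z_{n-1}|²`. -/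
noncomputable def hartogsA {n : ℕ} [NeZero n] (F : ℝ → ℝ) (w : Fin n → ℂ) : ℝ :=
  F (Complex.normSq (w 0)) - ∑ k ∈ Finset.univ.erase 0, Complex.normSq (w k)

/-- The Kähler potential `Φ = -log A` of the Hartogs metric `g_F`. -/
noncomputable def hartogsPotential {n : ℕ} [NeZero n] (F : ℝ → ℝ) (w : Fin n → ℂ) : ℝ :=
  -Real.log (hartogsA F w)

/-- The Hartogs domain `D_F = {|z₀|² < x₀, |z₁|² + ⋯ + |z_{n-1}|² < F(|z₀|²)}`. -/
def hartogsDomain {n : ℕ} [NeZero n] (F : ℝ → ℝ) (x₀ : ℝ) : Set (Fin n → ℂ) :=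
  {w | Complex.normSq (w 0) < x₀ ∧
    ∑ k ∈ Finset.univ.erase 0, Complex.normSq (w k) < F (Complex.normSq (w 0))}

open Filter Topology Complex

section WirtingerAux

variable {n : ℕ} {f g : (Fin n → ℂ) → ℂ} {z : Fin n → ℂ} {i : Fin n}

lemma wdz_congr (h : f =ᶠ[𝓝 z] g) : wdz i f z = wdz i g z := by
  unfold wdz; rw [h.fderiv_eq]

lemma wdzbar_congr (h : f =ᶠ[𝓝 z] g) : wdzbar i f z = wdzbar i g z := by
  unfold wdzbar; rw [h.fderiv_eq]

lemma wdzbar_add (hf : DifferentiableAt ℝ f z) (hg : DifferentiableAt ℝ g z) :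
    wdzbar i (fun w => f w + g w) z = wdzbar i f z + wdzbar i g z := by
  unfold wdzbar
  rw [fderiv_fun_add hf hg]
  simp
  ring

lemma wdzbar_const_mul (c : ℂ) (hf : DifferentiableAt ℝ f z) :
    wdzbar i (fun w => c * f w) z = c * wdzbar i f z := by
  unfold wdzbar
  rw [fderiv_const_mul hf c]
  simp
  ring

lemma wdz_add (hf : DifferentiableAt ℝ f z) (hg : DifferentiableAt ℝ g z) :
    wdz i (fun w => f w + g w) z = wdz i f z + wdz i g z := by
  unfold wdz
  rw [fderiv_fun_add hf hg]
  simp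
  ring

lemma wdz_const_mul (c : ℂ) (hf : DifferentiableAt ℝ f z) :
    wdz i (fun w => c * f w) z = c * wdz i f z := by
  unfold wdz
  rw [fderiv_const_mul hf c]
  simp
  ring

lemma wdz_const (c : ℂ) : wdz i (fun _ => c) z = 0 := by
  unfold wdz
  rw [fderiv_fun_const]
  simp

lemma wdzbar_differentiableAt (hf : ContDiffAt ℝ 2 f z) :
    DifferentiableAt ℝ (wdzbar i f) z := by
  have h1 : ContDiffAt ℝ 1 (fderiv ℝ f) z := hf.fderiv_right (by norm_num)
  have h2 : DifferentiableAt ℝ (fderiv ℝ f) z := h1.differentiableAt (by norm_num)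
  have h3 : ∀ v : Fin n → ℂ, DifferentiableAt ℝ (fun w => fderiv ℝ f w v) z := fun v =>
    ((ContinuousLinearMap.apply ℝ ℂ v).differentiableAt).comp z h2
  exact (((h3 (Pi.single i 1)).add ((h3 (Pi.single i Complex.I)).const_mul Complex.I)).const_mul _)

end WirtingerAux

section NormSqAux

noncomputable def nsqD (a : ℂ) : ℂ →L[ℝ] ℝ := (2*a.re) • Complex.reCLM + (2*a.im) • Complex.imCLM

lemma nsqD_apply (a v : ℂ) : nsqD a v = 2*(a.re * v.re + a.im * v.im) := by
  simp [nsqD]; ring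

lemma hasFDerivAt_normSq (a : ℂ) : HasFDerivAt Complex.normSq (nsqD a) a := by
  have h1 : HasFDerivAt (fun v : ℂ => v.re * v.re + v.im * v.im) (nsqD a) a := by
    have hre := (Complex.reCLM.hasFDerivAt (x := a)).mul (Complex.reCLM.hasFDerivAt (x := a))
    have him := (Complex.imCLM.hasFDerivAt (x := a)).mul (Complex.imCLM.hasFDerivAt (x := a))
    have : HasFDerivAt (fun v : ℂ => v.re * v.re + v.im * v.im) _ a := hre.add him
    refine this.congr_fderiv ?_
    ext v
    simp [nsqD]
    ring
  exact h1.congr_of_eventuallyEq (by filter_upwards with v; simp [Complex.normSq_apply])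

lemma contDiff_normSq {m : WithTop ℕ∞} : ContDiff ℝ m Complex.normSq := by
  have h1 : ContDiff ℝ m (fun v : ℂ => v.re * v.re + v.im * v.im) :=
    (Complex.reCLM.contDiff.mul Complex.reCLM.contDiff).add
      (Complex.imCLM.contDiff.mul Complex.imCLM.contDiff)
  have he : Complex.normSq = fun v : ℂ => v.re * v.re + v.im * v.im :=
    funext fun v => Complex.normSq_apply v
  rw [he]
  exact h1

/-- derivative of `b ↦ (φ (normSq b) : ℂ)` -/
lemma hasFDerivAt_K1 {φ : ℝ → ℝ} {d : ℝ} {a : ℂ} (hφ : HasDerivAt φ d (Complex.normSq a)) :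
    HasFDerivAt (fun b : ℂ => ((φ (Complex.normSq b) : ℝ) : ℂ))
      (Complex.ofRealCLM.comp (d • (nsqD a))) a := by
  have h1 : HasFDerivAt (fun b : ℂ => φ (Complex.normSq b)) (d • nsqD a) a :=
    hφ.comp_hasFDerivAt a (hasFDerivAt_normSq a)
  exact (Complex.ofRealCLM.hasFDerivAt).comp a h1

/-- derivative of `b ↦ (ψ (normSq b) : ℂ) * b` -/
lemma hasFDerivAt_K2 {ψ : ℝ → ℝ} {d : ℝ} {a : ℂ} (hψ : HasDerivAt ψ d (Complex.normSq a)) :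
    HasFDerivAt (fun b : ℂ => ((ψ (Complex.normSq b) : ℝ) : ℂ) * b)
      (((ψ (Complex.normSq a) : ℂ)) • (ContinuousLinearMap.id ℝ ℂ) +
        a • (Complex.ofRealCLM.comp (d • nsqD a))) a := by
  have h1 := hasFDerivAt_K1 hψ
  have h2 : HasFDerivAt (fun b : ℂ => b) (ContinuousLinearMap.id ℝ ℂ) a := hasFDerivAt_id a
  exact h1.mul h2

end NormSqAux

section CompPr0

variable {n : ℕ} [NeZero n]

noncomputable def pr0 {n : ℕ} [NeZero n] : ((Fin n) → ℂ) →L[ℝ] ℂ := ContinuousLinearMap.proj 0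

lemma hasFDerivAt_comp_pr0 {K : ℂ → ℂ} {K' : ℂ →L[ℝ] ℂ} {z : Fin n → ℂ}
    (hK : HasFDerivAt K K' (z 0)) :
    HasFDerivAt (fun w : Fin n → ℂ => K (w 0)) (K'.comp pr0) z :=
  hK.comp z (pr0.hasFDerivAt)

lemma wdz_comp_pr0_ne {K : ℂ → ℂ} {K' : ℂ →L[ℝ] ℂ} {z : Fin n → ℂ}
    (hK : HasFDerivAt K K' (z 0)) {α : Fin n} (hα : α ≠ 0) :
    wdz α (fun w : Fin n → ℂ => K (w 0)) z = 0 := by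
  rw [wdz, (hasFDerivAt_comp_pr0 hK).fderiv]
  simp [pr0, Pi.single_eq_of_ne (Ne.symm hα)]

lemma wdzbar_comp_pr0_ne {K : ℂ → ℂ} {K' : ℂ →L[ℝ] ℂ} {z : Fin n → ℂ}
    (hK : HasFDerivAt K K' (z 0)) {β : Fin n} (hβ : β ≠ 0) :
    wdzbar β (fun w : Fin n → ℂ => K (w 0)) z = 0 := by
  rw [wdzbar, (hasFDerivAt_comp_pr0 hK).fderiv]
  simp [pr0, Pi.single_eq_of_ne (Ne.symm hβ)]

lemma wdz0_comp_pr0 {K : ℂ → ℂ} {K' : ℂ →L[ℝ] ℂ} {z : Fin n → ℂ}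
    (hK : HasFDerivAt K K' (z 0)) :
    wdz 0 (fun w : Fin n → ℂ => K (w 0)) z
      = (1/2 : ℂ) * (K' 1 - Complex.I * K' Complex.I) := by
  rw [wdz, (hasFDerivAt_comp_pr0 hK).fderiv]
  simp [pr0]

lemma wdzbar0_comp_pr0 {K : ℂ → ℂ} {K' : ℂ →L[ℝ] ℂ} {z : Fin n → ℂ}
    (hK : HasFDerivAt K K' (z 0)) :
    wdzbar 0 (fun w : Fin n → ℂ => K (w 0)) z
      = (1/2 : ℂ) * (K' 1 + Complex.I * K' Complex.I) := by
  rw [wdzbar, (hasFDerivAt_comp_pr0 hK).fderiv]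
  simp [pr0]

/-- `∂̄₀` of `w ↦ (φ(|w₀|²):ℂ)` is `φ'(|w₀|²)·w₀`. -/
lemma wdzbar0_phi {φ : ℝ → ℝ} {d : ℝ} {z : Fin n → ℂ}
    (hφ : HasDerivAt φ d (Complex.normSq (z 0))) :
    wdzbar 0 (fun w : Fin n → ℂ => ((φ (Complex.normSq (w 0)) : ℝ) : ℂ)) z
      = (d : ℂ) * z 0 := by
  rw [wdzbar0_comp_pr0 (hasFDerivAt_K1 hφ)]
  simp [Complex.ext_iff, nsqD_apply, Complex.normSq_apply]
  constructor <;> ring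

/-- `∂₀` of `w ↦ (ψ(|w₀|²):ℂ)·w₀` at `z` is `ψ'·|z₀|² + ψ`. -/
lemma wdz0_psi_mul {ψ : ℝ → ℝ} {d : ℝ} {z : Fin n → ℂ}
    (hψ : HasDerivAt ψ d (Complex.normSq (z 0))) :
    wdz 0 (fun w : Fin n → ℂ => ((ψ (Complex.normSq (w 0)) : ℝ) : ℂ) * w 0) z
      = ((d * Complex.normSq (z 0) + ψ (Complex.normSq (z 0)) : ℝ) : ℂ) := by
  rw [wdz0_comp_pr0 (hasFDerivAt_K2 hψ)]
  simp [Complex.ext_iff, nsqD_apply, Complex.normSq_apply]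
  constructor <;> ring

end CompPr0

section PhiEntries

variable {n : ℕ} [NeZero n]

/-- the two entry computations for `g(w) = φ(|w₀|²)`. -/
lemma wdz0_wdzbar0_phi {φ : ℝ → ℝ} {z : Fin n → ℂ}
    (hol : ∀ᶠ w in 𝓝 z, HasDerivAt φ (deriv φ (Complex.normSq (w 0))) (Complex.normSq (w 0)))
    (h2 : HasDerivAt (deriv φ) (deriv (deriv φ) (Complex.normSq (z 0))) (Complex.normSq (z 0))) :
    wdz 0 (wdzbar 0 (fun u : Fin n → ℂ => ((φ (Complex.normSq (u 0)) : ℝ) : ℂ))) z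
      = ((deriv (deriv φ) (Complex.normSq (z 0)) * Complex.normSq (z 0)
          + deriv φ (Complex.normSq (z 0)) : ℝ) : ℂ) := by
  have hev : wdzbar 0 (fun u : Fin n → ℂ => ((φ (Complex.normSq (u 0)) : ℝ) : ℂ))
      =ᶠ[𝓝 z] fun w => ((deriv φ (Complex.normSq (w 0)) : ℝ) : ℂ) * w 0 := by
    filter_upwards [hol] with w hw
    exact wdzbar0_phi hw
  rw [wdz_congr hev]
  exact wdz0_psi_mul h2

lemma wdz_wdzbar_phi_ne {φ : ℝ → ℝ} {z : Fin n → ℂ}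
    (hol : ∀ᶠ w in 𝓝 z, HasDerivAt φ (deriv φ (Complex.normSq (w 0))) (Complex.normSq (w 0)))
    (h2 : HasDerivAt (deriv φ) (deriv (deriv φ) (Complex.normSq (z 0))) (Complex.normSq (z 0)))
    {α : Fin n} (β : Fin n) (hα : α ≠ 0) :
    wdz α (wdzbar β (fun u : Fin n → ℂ => ((φ (Complex.normSq (u 0)) : ℝ) : ℂ))) z = 0 := by
  by_cases hβ : β = 0
  · subst hβ
    have hev : wdzbar 0 (fun u : Fin n → ℂ => ((φ (Complex.normSq (u 0)) : ℝ) : ℂ))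
        =ᶠ[𝓝 z] fun w => ((deriv φ (Complex.normSq (w 0)) : ℝ) : ℂ) * w 0 := by
      filter_upwards [hol] with w hw
      exact wdzbar0_phi hw
    rw [wdz_congr hev]
    exact wdz_comp_pr0_ne (hasFDerivAt_K2 h2) hα
  · have hev : wdzbar β (fun u : Fin n → ℂ => ((φ (Complex.normSq (u 0)) : ℝ) : ℂ))
        =ᶠ[𝓝 z] fun _ => (0 : ℂ) := by
      filter_upwards [hol] with w hw
      exact wdzbar_comp_pr0_ne (hasFDerivAt_K1 hw) hβ
    rw [wdz_congr hev]
    exact wdz_const 0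

end PhiEntries

section Split

variable {n : ℕ} [NeZero n]

lemma cHessian_split {f g A : (Fin n → ℂ) → ℝ} {c : ℝ} {z : Fin n → ℂ}
    {U : Set (Fin n → ℂ)} (hU : IsOpen U) (hz : z ∈ U)
    (heq : ∀ w ∈ U, f w = g w + c * A w)
    (hg : ∀ w ∈ U, ContDiffAt ℝ 2 (fun u => ((g u : ℝ) : ℂ)) w)
    (hA : ∀ w ∈ U, ContDiffAt ℝ 2 (fun u => ((A u : ℝ) : ℂ)) w)
    (α β : Fin n) :
    cHessian f z α β = wdz α (wdzbar β (fun u => ((g u : ℝ) : ℂ))) z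
      + (c : ℂ) * cHessian A z α β := by
  have hUev : U ∈ 𝓝 z := hU.mem_nhds hz
  have h1 : wdzbar β (fun u => ((f u : ℝ) : ℂ))
      =ᶠ[𝓝 z] fun w => wdzbar β (fun u => ((g u : ℝ) : ℂ)) w
        + (c : ℂ) * wdzbar β (fun u => ((A u : ℝ) : ℂ)) w := by
    filter_upwards [eventually_mem_nhds_iff.mpr hUev] with w hw
    have hwU : w ∈ U := mem_of_mem_nhds hw
    have hfw : (fun u => ((f u : ℝ) : ℂ))
        =ᶠ[𝓝 w] fun u => ((g u : ℝ) : ℂ) + (c : ℂ) * ((A u : ℝ) : ℂ) := by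
      filter_upwards [hw] with v hv
      rw [heq v hv]
      push_cast
      ring
    rw [wdzbar_congr hfw,
      wdzbar_add ((hg w hwU).differentiableAt (by norm_num))
        (((hA w hwU).differentiableAt (by norm_num)).const_mul (c : ℂ)),
      wdzbar_const_mul (c : ℂ) ((hA w hwU).differentiableAt (by norm_num))]
  have dg : DifferentiableAt ℝ (wdzbar β (fun u => ((g u : ℝ) : ℂ))) z :=
    wdzbar_differentiableAt (hg z hz)
  have dA : DifferentiableAt ℝ (wdzbar β (fun u => ((A u : ℝ) : ℂ))) z :=
    wdzbar_differentiableAt (hA z hz)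
  calc cHessian f z α β = wdz α (wdzbar β (fun u => ((f u : ℝ) : ℂ))) z := rfl
    _ = wdz α (fun w => wdzbar β (fun u => ((g u : ℝ) : ℂ)) w
          + (c : ℂ) * wdzbar β (fun u => ((A u : ℝ) : ℂ)) w) z := wdz_congr h1
    _ = _ := by
        rw [wdz_add dg (dA.const_mul (c : ℂ)),
          wdz_const_mul (c : ℂ) dA]
        rfl

end Split
/-- Ricci curvature of the Hartogs metric: with
`det(h) = B·A^{-(n+1)}`, the complex Hessian `Ric` of `-log det(h)` satisfies
`Ric_{0 0̄} = -L(|z₀|²) - (n+1) g_{0 0̄}` and `Ric_{α β̄} = -(n+1) g_{α β̄}` for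
`α ≥ 1`, where `g` is the complex Hessian of `-log A` and `L = (x(log B)')'`. -/
theorem stmt_8 (n : ℕ) [NeZero n] (x₀ : ℝ) (F : ℝ → ℝ)
    (hFs : ContDiffOn ℝ (⊤ : ℕ∞) F (Set.Ioo 0 x₀)) (hFpos : ∀ x ∈ Set.Ioo 0 x₀, 0 < F x)
    (hB : ∀ x ∈ Set.Ioo 0 x₀,
      0 < (deriv F x) ^ 2 * x - F x * (deriv F x + deriv (deriv F) x * x))
    (z : Fin n → ℂ) (hz0 : Complex.normSq (z 0) ∈ Set.Ioo 0 x₀) (hA : 0 < hartogsA F z) :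
    (cHessian (fun w => -Real.log
        (((deriv F (Complex.normSq (w 0))) ^ 2 * Complex.normSq (w 0) -
            F (Complex.normSq (w 0)) *
              (deriv F (Complex.normSq (w 0)) +
                deriv (deriv F) (Complex.normSq (w 0)) * Complex.normSq (w 0))) /
          hartogsA F w ^ (n + 1))) z) 0 0
      = ((-(deriv (fun t => t * deriv (fun s =>
            Real.log ((deriv F s) ^ 2 * s - F s * (deriv F s + deriv (deriv F) s * s))) t)
            (Complex.normSq (z 0))) : ℝ) : ℂ) -
        ((n : ℂ) + 1) * (cHessian (hartogsPotential F) z) 0 0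
    ∧ ∀ α β : Fin n, α ≠ 0 →
        (cHessian (fun w => -Real.log
            (((deriv F (Complex.normSq (w 0))) ^ 2 * Complex.normSq (w 0) -
                F (Complex.normSq (w 0)) *
                  (deriv F (Complex.normSq (w 0)) +
                    deriv (deriv F) (Complex.normSq (w 0)) * Complex.normSq (w 0))) /
              hartogsA F w ^ (n + 1))) z) α β
          = -((n : ℂ) + 1) * (cHessian (hartogsPotential F) z) α β := by
  have hxI : Complex.normSq (z 0) ∈ Set.Ioo 0 x₀ := hz0
  have hIo : IsOpen (Set.Ioo (0:ℝ) x₀) := isOpen_Ioo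
  set ψ : ℝ → ℝ := fun s =>
    Real.log ((deriv F s) ^ 2 * s - F s * (deriv F s + deriv (deriv F) s * s)) with hψdef
  set φ : ℝ → ℝ := fun s => -ψ s with hφdef
  -- smoothness ladder
  have hF1 : ContDiffOn ℝ 4 (deriv F) (Set.Ioo 0 x₀) := hFs.deriv_of_isOpen hIo (WithTop.coe_le_coe.mpr le_top)
  have hF2 : ContDiffOn ℝ 3 (deriv (deriv F)) (Set.Ioo 0 x₀) :=
    hF1.deriv_of_isOpen hIo (by norm_num)
  have hF0 : ContDiffOn ℝ 3 F (Set.Ioo 0 x₀) := hFs.of_le (WithTop.coe_le_coe.mpr le_top)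
  have hBfs : ContDiffOn ℝ 3
      (fun s => (deriv F s) ^ 2 * s - F s * (deriv F s + deriv (deriv F) s * s))
      (Set.Ioo 0 x₀) :=
    (((hF1.of_le (by norm_num)).pow 2).mul contDiffOn_id).sub
      (hF0.mul ((hF1.of_le (by norm_num)).add (hF2.mul contDiffOn_id)))
  have hψs : ContDiffOn ℝ 3 ψ (Set.Ioo 0 x₀) := by
    rw [hψdef]; exact hBfs.log (fun t ht => (hB t ht).ne')
  have hφs : ContDiffOn ℝ 3 φ (Set.Ioo 0 x₀) := by
    rw [hφdef]; exact hψs.neg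
  have hφ1 : ContDiffOn ℝ 2 (deriv φ) (Set.Ioo 0 x₀) := hφs.deriv_of_isOpen hIo (by norm_num)
  have hψ1 : ContDiffOn ℝ 2 (deriv ψ) (Set.Ioo 0 x₀) := hψs.deriv_of_isOpen hIo (by norm_num)
  -- the open set U
  have hnsq : ∀ k : Fin n, ContDiff ℝ 2 (fun w : Fin n → ℂ => Complex.normSq (w k)) :=
    fun k => contDiff_normSq.comp
      (ContinuousLinearMap.proj (R := ℝ) (φ := fun _ : Fin n => ℂ) k).contDiff
  have hVo : IsOpen {w : Fin n → ℂ | Complex.normSq (w 0) ∈ Set.Ioo 0 x₀} :=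
    hIo.preimage (Complex.continuous_normSq.comp (continuous_apply 0))
  have hAcd : ∀ w : Fin n → ℂ, Complex.normSq (w 0) ∈ Set.Ioo 0 x₀ →
      ContDiffAt ℝ 2 (hartogsA F) w := by
    intro w hw
    have h1 : ContDiffAt ℝ 2 (fun w : Fin n → ℂ => F (Complex.normSq (w 0))) w :=
      ((hFs.contDiffAt (hIo.mem_nhds hw)).of_le (WithTop.coe_le_coe.mpr le_top)).comp w (hnsq 0).contDiffAt
    have h2 : ContDiffAt ℝ 2
        (fun w : Fin n → ℂ => ∑ k ∈ Finset.univ.erase 0, Complex.normSq (w k)) w :=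
      (ContDiff.sum fun k _ => hnsq k).contDiffAt
    exact h1.sub h2
  set U : Set (Fin n → ℂ) :=
    {w | Complex.normSq (w 0) ∈ Set.Ioo 0 x₀} ∩ hartogsA F ⁻¹' Set.Ioi 0 with hUdef
  have hAco : ContinuousOn (hartogsA F) {w : Fin n → ℂ | Complex.normSq (w 0) ∈ Set.Ioo 0 x₀} :=
    fun w hw => ((hAcd w hw).continuousAt).continuousWithinAt
  have hUo : IsOpen U := hAco.isOpen_inter_preimage hVo isOpen_Ioi
  have hzU : z ∈ U := ⟨hxI, hA⟩
  -- smoothness of the two pieces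
  have hΦ : ∀ w ∈ U, ContDiffAt ℝ 2 (fun u => ((hartogsPotential F u : ℝ) : ℂ)) w := by
    intro w hw
    have h1 : ContDiffAt ℝ 2 (hartogsA F) w := hAcd w hw.1
    have h2 : ContDiffAt ℝ 2 (fun u => Real.log (hartogsA F u)) w := h1.log (ne_of_gt hw.2)
    exact Complex.ofRealCLM.contDiff.contDiffAt.comp w h2.neg
  have hgc : ∀ w ∈ U, ContDiffAt ℝ 2
      (fun u : Fin n → ℂ => ((φ (Complex.normSq (u 0)) : ℝ) : ℂ)) w := by
    intro w hw
    have h1 : ContDiffAt ℝ 2 φ (Complex.normSq (w 0)) :=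
      (hφs.contDiffAt (hIo.mem_nhds hw.1)).of_le (by norm_num)
    exact Complex.ofRealCLM.contDiff.contDiffAt.comp w
      (ContDiffAt.comp (g := φ) w h1 (hnsq 0).contDiffAt)
  -- the decomposition on U
  have heq : ∀ w ∈ U,
      -Real.log (((deriv F (Complex.normSq (w 0))) ^ 2 * Complex.normSq (w 0) -
            F (Complex.normSq (w 0)) *
              (deriv F (Complex.normSq (w 0)) +
                deriv (deriv F) (Complex.normSq (w 0)) * Complex.normSq (w 0))) /
          hartogsA F w ^ (n + 1))
        = φ (Complex.normSq (w 0)) + (-((n:ℝ)+1)) * hartogsPotential F w := by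
    intro w hw
    have hBpos := hB _ hw.1
    have hApos : (0:ℝ) < hartogsA F w := hw.2
    rw [Real.log_div hBpos.ne' (pow_ne_zero _ hApos.ne'), Real.log_pow, hφdef, hψdef]
    simp only [hartogsPotential]
    push_cast
    ring
  -- the key splitting
  have key : ∀ α β : Fin n,
      cHessian (fun w => -Real.log
        (((deriv F (Complex.normSq (w 0))) ^ 2 * Complex.normSq (w 0) -
            F (Complex.normSq (w 0)) *
              (deriv F (Complex.normSq (w 0)) +
                deriv (deriv F) (Complex.normSq (w 0)) * Complex.normSq (w 0))) /
          hartogsA F w ^ (n + 1))) z α β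
      = wdz α (wdzbar β (fun u : Fin n → ℂ => ((φ (Complex.normSq (u 0)) : ℝ) : ℂ))) z
        + ((-((n:ℝ)+1) : ℝ) : ℂ) * cHessian (hartogsPotential F) z α β :=
    fun α β => cHessian_split (g := fun w => φ (Complex.normSq (w 0))) hUo hzU heq hgc hΦ α β
  -- derivative facts for φ
  have hφdiff : ∀ t ∈ Set.Ioo (0:ℝ) x₀, HasDerivAt φ (deriv φ t) t := fun t ht =>
    ((hφs.differentiableOn (by norm_num)).differentiableAt (hIo.mem_nhds ht)).hasDerivAt
  have hol : ∀ᶠ w in 𝓝 z,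
      HasDerivAt φ (deriv φ (Complex.normSq (w 0))) (Complex.normSq (w 0)) := by
    filter_upwards [hVo.mem_nhds hxI] with w hw
    exact hφdiff _ hw
  have h2 : HasDerivAt (deriv φ) (deriv (deriv φ) (Complex.normSq (z 0)))
      (Complex.normSq (z 0)) :=
    ((hφ1.differentiableOn (by norm_num)).differentiableAt (hIo.mem_nhds hxI)).hasDerivAt
  have hψ2 : HasDerivAt (deriv ψ) (deriv (deriv ψ) (Complex.normSq (z 0)))
      (Complex.normSq (z 0)) :=
    ((hψ1.differentiableOn (by norm_num)).differentiableAt (hIo.mem_nhds hxI)).hasDerivAt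
  have e1 : deriv φ = fun t => -deriv ψ t := by
    funext t
    rw [hφdef]
    exact deriv.neg
  have e2 : deriv (deriv φ) (Complex.normSq (z 0))
      = -deriv (deriv ψ) (Complex.normSq (z 0)) := by
    rw [e1]; exact deriv.neg
  have e1' : deriv φ (Complex.normSq (z 0)) = -deriv ψ (Complex.normSq (z 0)) := by
    simp only [e1]
  have e3 : deriv (fun t => t * deriv ψ t) (Complex.normSq (z 0))
      = 1 * deriv ψ (Complex.normSq (z 0))
        + Complex.normSq (z 0) * deriv (deriv ψ) (Complex.normSq (z 0)) :=
    ((hasDerivAt_id _).mul hψ2).deriv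
  constructor
  · rw [key 0 0, wdz0_wdzbar0_phi hol h2, e3, e2, e1']
    push_cast
    ring
  · intro α β hα
    rw [key α β, wdz_wdzbar_phi_ne hol h2 β hα]
    push_cast
    ring
end

section
/- Let $F : [0, x_0) \to (0,\infty)$ be decreasing, smooth on $(0,x_0)$, with $(xF'/F)' < 0$. Suppose $\frac{d}{dx}\left[x \frac{d}{dx}\log\left(xF'(x)^2 - F(x)(F'(x) + F''(x)x)\right)\right] = 0$ for all $x \in (0, x_0)$. Then there exist constants $c_1, c_2 > 0$ such that $F(x) = c_1 - c_2 x$ for all $x \in [0, x_0)$. -/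
open Set Filter Topology


private lemma constOn_Ioo {f : ℝ → ℝ} {a b : ℝ}
    (hd : ∀ x ∈ Set.Ioo a b, DifferentiableAt ℝ f x)
    (h0 : ∀ x ∈ Set.Ioo a b, deriv f x = 0) :
    ∀ x ∈ Set.Ioo a b, ∀ y ∈ Set.Ioo a b, f x = f y := by
  have hc : ContinuousOn f (Set.Ioo a b) := fun x hx =>
    (hd x hx).continuousAt.continuousWithinAt
  have hdiff : DifferentiableOn ℝ f (interior (Set.Ioo a b)) := by
    rw [interior_Ioo]; exact fun x hx => (hd x hx).differentiableWithinAt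
  have hmono : MonotoneOn f (Set.Ioo a b) := by
    refine monotoneOn_of_deriv_nonneg (convex_Ioo a b) hc hdiff ?_
    intro x hx; rw [interior_Ioo] at hx; rw [h0 x hx]
  have hanti : AntitoneOn f (Set.Ioo a b) := by
    refine antitoneOn_of_deriv_nonpos (convex_Ioo a b) hc hdiff ?_
    intro x hx; rw [interior_Ioo] at hx; rw [h0 x hx]
  intro x hx y hy
  rcases le_total x y with h | h
  · exact le_antisymm (hmono hx hy h) (hanti hx hy h)
  · exact (le_antisymm (hmono hy hx h) (hanti hy hx h)).symm

/-- if `F` is admissible (decreasing, positive, `(xF'/F)' < 0`) and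
`L(x) = (x (log(xF'² - F(F'+F''x)))')' = 0` on `(0,x₀)`, then `F(x) = c₁ - c₂x`
with `c₁, c₂ > 0`. -/
theorem stmt_12 (x₀ : ℝ) (hx₀ : 0 < x₀) (F : ℝ → ℝ)
    (hFc : ContinuousOn F (Set.Ico 0 x₀)) (hFs : ContDiffOn ℝ (⊤ : ℕ∞) F (Set.Ioo 0 x₀))
    (hFpos : ∀ x ∈ Set.Ico 0 x₀, 0 < F x) (hFdec : AntitoneOn F (Set.Ico 0 x₀))
    (hk : ∀ x ∈ Set.Ico 0 x₀, deriv (fun t => t * deriv F t / F t) x < 0)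
    (hL : ∀ x ∈ Set.Ioo 0 x₀,
      deriv (fun t => t * deriv (fun s =>
        Real.log (s * (deriv F s) ^ 2 - F s * (deriv F s + deriv (deriv F) s * s))) t) x = 0) :
    ∃ c₁ c₂ : ℝ, 0 < c₁ ∧ 0 < c₂ ∧ ∀ x ∈ Set.Ico 0 x₀, F x = c₁ - c₂ * x := by
  have hIopen : IsOpen (Set.Ioo (0:ℝ) x₀) := isOpen_Ioo
  set F₁ := deriv F with hF1def
  set F₂ := deriv F₁ with hF2def
  have hF1s : ContDiffOn ℝ (⊤ : ℕ∞) F₁ (Set.Ioo 0 x₀) := hFs.deriv_of_isOpen hIopen (by simp)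
  have hF2s : ContDiffOn ℝ (⊤ : ℕ∞) F₂ (Set.Ioo 0 x₀) := hF1s.deriv_of_isOpen hIopen (by simp)
  have hFpos' : ∀ x ∈ Set.Ioo 0 x₀, 0 < F x := fun x hx => hFpos x (Set.Ioo_subset_Ico_self hx)
  have hdF : ∀ x ∈ Set.Ioo 0 x₀, HasDerivAt F (F₁ x) x := fun x hx =>
    ((hFs.differentiableOn (by simp)).differentiableAt (hIopen.mem_nhds hx)).hasDerivAt
  have hdF1 : ∀ x ∈ Set.Ioo 0 x₀, HasDerivAt F₁ (F₂ x) x := fun x hx =>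
    ((hF1s.differentiableOn (by simp)).differentiableAt (hIopen.mem_nhds hx)).hasDerivAt
  set B : ℝ → ℝ := fun s => s * F₁ s ^ 2 - F s * (F₁ s + F₂ s * s) with hBdef
  clear_value B
  have hBs : ContDiffOn ℝ (⊤ : ℕ∞) B (Set.Ioo 0 x₀) := by
    rw [hBdef]
    exact (contDiffOn_id.mul (hF1s.pow 2)).sub (hFs.mul (hF1s.add (hF2s.mul contDiffOn_id)))
  have hGd : ∀ x ∈ Set.Ioo 0 x₀,
      HasDerivAt (fun t => t * F₁ t / F t) (-B x / F x ^ 2) x := by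
    intro x hx
    have h1 : HasDerivAt (fun t => t * F₁ t) (1 * F₁ x + x * F₂ x) x :=
      (hasDerivAt_id x).mul (hdF1 x hx)
    have h2 := h1.div (hdF x hx) (hFpos' x hx).ne'
    refine h2.congr_deriv ?_
    symm
    rw [hBdef]
    field_simp
    ring
  have hBpos : ∀ x ∈ Set.Ioo 0 x₀, 0 < B x := by
    intro x hx
    have hk' := hk x (Set.Ioo_subset_Ico_self hx)
    rw [(hGd x hx).deriv] at hk'
    by_contra h
    push_neg at h
    have : 0 ≤ -B x / F x ^ 2 :=
      div_nonneg (by linarith) (pow_nonneg (hFpos' x hx).le 2)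
    linarith
  have hBd : ∀ x ∈ Set.Ioo 0 x₀, HasDerivAt B (deriv B x) x := fun x hx =>
    ((hBs.differentiableOn (by simp)).differentiableAt (hIopen.mem_nhds hx)).hasDerivAt
  have hB's : ContDiffOn ℝ (⊤ : ℕ∞) (deriv B) (Set.Ioo 0 x₀) := hBs.deriv_of_isOpen hIopen (by simp)
  have hLBderiv : ∀ x ∈ Set.Ioo 0 x₀,
      deriv (fun s => Real.log (B s)) x = deriv B x / B x := fun x hx =>
    ((hBd x hx).log (hBpos x hx).ne').deriv
  have hL2 : ∀ x ∈ Set.Ioo 0 x₀,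
      deriv (fun t => t * deriv (fun s => Real.log (B s)) t) x = 0 := by
    simp only [hBdef]; exact hL
  have hψev : ∀ x ∈ Set.Ioo 0 x₀,
      (fun t => t * deriv (fun s => Real.log (B s)) t) =ᶠ[nhds x]
      (fun t => t * (deriv B t / B t)) := by
    intro x hx
    filter_upwards [hIopen.mem_nhds hx] with t ht
    rw [hLBderiv t ht]
  have hψdiff : ∀ x ∈ Set.Ioo 0 x₀,
      DifferentiableAt ℝ (fun t => t * deriv (fun s => Real.log (B s)) t) x := by
    intro x hx
    have h2 : DifferentiableAt ℝ (fun t => t * (deriv B t / B t)) x := by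
      exact differentiableAt_id.mul
        (((hB's.differentiableOn (by simp)).differentiableAt (hIopen.mem_nhds hx)).div
          ((hBs.differentiableOn (by simp)).differentiableAt (hIopen.mem_nhds hx))
          (hBpos x hx).ne')
    exact (hψev x hx).differentiableAt_iff.mpr h2
  set x₁ : ℝ := x₀ / 2 with hx₁def
  have hx₁ : x₁ ∈ Set.Ioo 0 x₀ := by rw [hx₁def]; exact ⟨half_pos hx₀, half_lt_self hx₀⟩
  clear_value x₁
  set a : ℝ := x₁ * (deriv B x₁ / B x₁) with hadef
  clear_value a
  have hψconst : ∀ x ∈ Set.Ioo 0 x₀, x * (deriv B x / B x) = a := by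
    intro x hx
    have h := constOn_Ioo hψdiff hL2 x hx x₁ hx₁
    rw [hLBderiv x hx, hLBderiv x₁ hx₁] at h
    rw [hadef]; exact h
  have hB' : ∀ x ∈ Set.Ioo 0 x₀, deriv B x = a * B x / x := by
    intro x hx
    have h := hψconst x hx
    rw [mul_div_assoc'] at h
    rw [div_eq_iff (hBpos x hx).ne'] at h
    rw [eq_div_iff hx.1.ne']
    linarith
  -- the function v = 1 - x F'/F
  set v : ℝ → ℝ := fun t => 1 - t * F₁ t / F t with hvdef
  clear_value v
  have hvd : ∀ x ∈ Set.Ioo 0 x₀, HasDerivAt v (B x / F x ^ 2) x := by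
    intro x hx
    have h := (hGd x hx).const_sub 1
    rw [hvdef]
    refine h.congr_deriv ?_
    symm
    ring
  have hvderiv : ∀ x ∈ Set.Ioo 0 x₀, deriv v x = B x / F x ^ 2 := fun x hx => (hvd x hx).deriv
  have hxF₁ : ∀ x ∈ Set.Ioo 0 x₀, x * F₁ x = (1 - v x) * F x := by
    intro x hx
    have hFx : F x ≠ 0 := (hFpos' x hx).ne'
    rw [hvdef]
    field_simp
    ring
  -- the function P = x v' + (1-a) v - v², constant
  set P : ℝ → ℝ := fun t => t * deriv v t + (1 - a) * v t - v t ^ 2 with hPdef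
  clear_value P
  have hPev : ∀ x ∈ Set.Ioo 0 x₀,
      P =ᶠ[nhds x] fun t => t * (B t / F t ^ 2) + (1 - a) * v t - v t ^ 2 := by
    intro x hx
    filter_upwards [hIopen.mem_nhds hx] with t ht
    rw [hPdef]
    simp only [hvderiv t ht]
  have hPd' : ∀ x ∈ Set.Ioo 0 x₀,
      HasDerivAt (fun t => t * (B t / F t ^ 2) + (1 - a) * v t - v t ^ 2) 0 x := by
    intro x hx
    have hFx := hFpos' x hx
    have hx0 : x ≠ 0 := hx.1.ne'
    have hF0 : F x ≠ 0 := hFx.ne'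
    have h1 : HasDerivAt (fun t => B t / F t ^ 2)
        ((deriv B x * F x ^ 2 - B x * (2 * F x ^ 1 * F₁ x)) / (F x ^ 2) ^ 2) x :=
      (hBd x hx).div ((hdF x hx).pow 2) (pow_ne_zero 2 hFx.ne')
    have h2 := (hasDerivAt_id x).mul h1
    have h3 := (h2.add ((hvd x hx).const_mul (1 - a))).sub ((hvd x hx).pow 2)
    refine h3.congr_deriv ?_
    symm
    rw [hB' x hx]
    have hf1 : F₁ x = (1 - v x) * F x / x := by
      rw [eq_div_iff hx.1.ne']
      linarith [hxF₁ x hx]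
    rw [hf1]
    simp only [id_eq]
    field_simp
    ring
  have hPdiff : ∀ x ∈ Set.Ioo 0 x₀, DifferentiableAt ℝ P x := fun x hx =>
    (hPev x hx).differentiableAt_iff.mpr (hPd' x hx).differentiableAt
  have hPderiv0 : ∀ x ∈ Set.Ioo 0 x₀, deriv P x = 0 := fun x hx =>
    ((hPev x hx).deriv_eq).trans (hPd' x hx).deriv
  set c : ℝ := P x₁ with hcdef
  clear_value c
  have hPconst : ∀ x ∈ Set.Ioo 0 x₀, P x = c := fun x hx =>
    (constOn_Ioo hPdiff hPderiv0 x hx x₁ hx₁).trans hcdef.symm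
  have hxv' : ∀ x ∈ Set.Ioo 0 x₀, x * deriv v x = c - (1 - a) * v x + v x ^ 2 := by
    intro x hx
    have h := hPconst x hx
    rw [hPdef] at h
    -- h : x * deriv v x + (1-a) * v x - v x ^ 2 = c  (beta)
    simp only at h
    linarith
  -- behavior at 0
  have h0mem : (0:ℝ) ∈ Set.Ico 0 x₀ := ⟨le_refl 0, hx₀⟩
  have hGdiff0 : DifferentiableAt ℝ (fun t => t * F₁ t / F t) 0 := by
    by_contra h
    have := hk 0 h0mem
    rw [deriv_zero_of_not_differentiableAt h] at this
    exact lt_irrefl 0 this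
  have hv00 : v 0 = 1 := by rw [hvdef]; simp
  have hvc0 : ContinuousAt v 0 := by
    rw [hvdef]; exact (continuousAt_const.sub hGdiff0.continuousAt)
  have hv0 : Tendsto v (𝓝[>] (0:ℝ)) (𝓝 1) := by
    have := hvc0.tendsto
    rw [hv00] at this
    exact this.mono_left nhdsWithin_le_nhds
  have hIoomem : Set.Ioo (0:ℝ) x₀ ∈ 𝓝[>] (0:ℝ) := Ioo_mem_nhdsGT_of_mem ⟨le_refl 0, hx₀⟩
  -- limit of x * v'
  have hlim2 : Tendsto (fun x => x * deriv v x) (𝓝[>] (0:ℝ)) (𝓝 (c + a)) := by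
    have h1 : Tendsto (fun x => c - (1 - a) * v x + v x ^ 2) (𝓝[>] (0:ℝ))
        (𝓝 (c - (1 - a) * 1 + 1 ^ 2)) :=
      (tendsto_const_nhds.sub (hv0.const_mul (1 - a))).add (hv0.pow 2)
    have h2 : (fun x => c - (1 - a) * v x + v x ^ 2) =ᶠ[𝓝[>] (0:ℝ)]
        (fun x => x * deriv v x) := by
      filter_upwards [hIoomem] with t ht
      exact (hxv' t ht).symm
    have h3 := h1.congr' h2
    convert h3 using 2
    ring
  have hca0 : c + a = 0 := by
    have hge : 0 ≤ c + a := by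
      refine ge_of_tendsto hlim2 ?_
      filter_upwards [hIoomem] with t ht
      have := hvderiv t ht
      have hpos : 0 < deriv v t := by
        rw [this]; exact div_pos (hBpos t ht) (pow_pos (hFpos' t ht) 2)
      exact (mul_pos ht.1 hpos).le
    rcases hge.lt_or_eq with hlt | he
    · exfalso
      set k : ℝ := (c + a) / 2 with hkdef
      have hkpos : 0 < k := by rw [hkdef]; linarith
      -- eventually x * v' > k
      have hev : ∀ᶠ x in 𝓝[>] (0:ℝ), k < x * deriv v x :=
        hlim2.eventually (eventually_gt_nhds (by rw [hkdef]; linarith))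
      rw [eventually_nhdsWithin_iff] at hev
      rcases Metric.eventually_nhds_iff.mp hev with ⟨δ, hδpos, hδ⟩
      set y : ℝ := min (δ / 2) (x₀ / 2) with hydef
      have hy0 : 0 < y := by rw [hydef]; exact lt_min (by linarith) (by linarith)
      have hysub : Set.Ioo (0:ℝ) y ⊆ Set.Ioo 0 x₀ := by
        apply Set.Ioo_subset_Ioo le_rfl
        rw [hydef]; exact (min_le_right _ _).trans (by linarith)
      have hyx : ∀ t ∈ Set.Ioo (0:ℝ) y, k < t * deriv v t := by
        intro t ht
        refine hδ ?_ ht.1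
        rw [Real.dist_eq, sub_zero, abs_of_pos ht.1]
        calc t < y := ht.2
        _ ≤ δ / 2 := by rw [hydef]; exact min_le_left _ _
        _ < δ := by linarith
      -- w = v - k log is monotone on Ioo 0 y
      have hwmono : StrictMonoOn (fun t => v t - k * Real.log t) (Set.Ioo 0 y) := by
        apply strictMonoOn_of_deriv_pos (convex_Ioo 0 y)
        · intro t ht
          exact ((hvd t (hysub ht)).sub
            ((Real.hasDerivAt_log ht.1.ne').const_mul k)).differentiableAt.continuousAt.continuousWithinAt
        · intro t ht
          rw [interior_Ioo] at ht
          rw [HasDerivAt.deriv (f := fun t => v t - k * Real.log t) ((hvd t (hysub ht)).sub ((Real.hasDerivAt_log ht.1.ne').const_mul k))]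
          rw [← hvderiv t (hysub ht)]
          have h5 := hyx t ht
          have h6 : k / t < deriv v t := by
            rw [div_lt_iff₀ ht.1]
            linarith [hyx t ht]
          have : k * t⁻¹ = k / t := by ring
          rw [this]
          linarith
      -- contradiction: v x ≤ v (y/2) + k log x - k log (y/2) → -∞
      set y2 : ℝ := y / 2 with hy2def
      have hy2mem : y2 ∈ Set.Ioo (0:ℝ) y := by
        rw [hy2def]; exact ⟨by linarith, by linarith⟩
      have hbound : ∀ᶠ x in 𝓝[>] (0:ℝ),
          v x < v y2 - k * Real.log y2 + k * Real.log x := by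
        filter_upwards [Ioo_mem_nhdsGT_of_mem (⟨le_refl (0:ℝ), hy2mem.1⟩ : (0:ℝ) ∈ Set.Ico 0 y2)]
          with x hx2
        have hxmem : x ∈ Set.Ioo (0:ℝ) y := ⟨hx2.1, hx2.2.trans hy2mem.2⟩
        have := hwmono hxmem hy2mem hx2.2
        simp only at this
        linarith
      have hlogbot : Tendsto (fun x => v y2 - k * Real.log y2 + k * Real.log x)
          (𝓝[>] (0:ℝ)) atBot := by
        apply Filter.tendsto_atBot_add_const_left
        exact (Real.tendsto_log_nhdsGT_zero.const_mul_atBot hkpos)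
      have hev1 : ∀ᶠ x in 𝓝[>] (0:ℝ), v x < 0 := by
        filter_upwards [hbound, hlogbot.eventually (eventually_le_atBot (0:ℝ))] with x h1 h2
        linarith
      have hev2 : ∀ᶠ x in 𝓝[>] (0:ℝ), (1:ℝ)/2 < v x :=
        hv0.eventually (eventually_gt_nhds (by norm_num))
      rcases (hev1.and hev2).exists with ⟨x, hx1, hx2⟩
      linarith
    · exact he.symm
  have hfact : ∀ x ∈ Set.Ioo 0 x₀, x * deriv v x = (v x - 1) * (v x + a) := by
    intro x hx
    rw [hxv' x hx]
    have : c = -a := by linarith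
    rw [this]; ring
  -- slope of v at 0
  set m : ℝ := -deriv (fun t => t * F₁ t / F t) 0 with hmdef
  have hm : 0 < m := by rw [hmdef]; linarith [hk 0 h0mem]
  have hvd0 : HasDerivAt v m 0 := by
    rw [hvdef, hmdef]
    simpa using hGdiff0.hasDerivAt.const_sub 1
  have hslope : Tendsto (fun x => (v x - 1) / x) (𝓝[>] (0:ℝ)) (𝓝 m) := by
    have h1 := hasDerivAt_iff_tendsto_slope.mp hvd0
    have h2 := h1.mono_left (nhdsWithin_mono 0 (fun x hx => ne_of_gt hx))
    refine h2.congr ?_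
    intro x
    rw [slope_def_field, hv00, sub_zero]
  have hvplusa : Tendsto (fun x => v x + a) (𝓝[>] (0:ℝ)) (𝓝 (1 + a)) :=
    hv0.add_const a
  have hderivvlim : Tendsto (deriv v) (𝓝[>] (0:ℝ)) (𝓝 (m * (1 + a))) := by
    have h1 := hslope.mul hvplusa
    refine h1.congr' ?_
    filter_upwards [hIoomem] with t ht
    have := hfact t ht
    field_simp
    rw [div_eq_iff ht.1.ne']
    linarith [hfact t ht]
  have hlhop : Tendsto (fun x => (v x - 1) / x) (𝓝[>] (0:ℝ)) (𝓝 (m * (1 + a))) := by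
    apply deriv.lhopital_zero_nhdsGT (f := fun x => v x - 1) (g := fun x => x)
    · filter_upwards [hIoomem] with t ht
      exact ((hvd t ht).sub_const 1).differentiableAt
    · filter_upwards [hIoomem] with t ht
      simp
    · have := hv0.sub_const 1
      simpa using this
    · exact tendsto_id.mono_left nhdsWithin_le_nhds
    · refine hderivvlim.congr' ?_
      filter_upwards [hIoomem] with t ht
      rw [deriv_id'']
      rw [((hvd t ht).sub_const 1).deriv, ← hvderiv t ht]
      simp
  have ha0 : a = 0 := by
    have := tendsto_nhds_unique hslope hlhop
    have h2 : m * a = 0 := by linarith [this]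
    rcases mul_eq_zero.mp h2 with h | h
    · exact absurd h hm.ne'
    · exact h
  have hfact2 : ∀ x ∈ Set.Ioo 0 x₀, x * deriv v x = (v x - 1) * v x := by
    intro x hx
    rw [hfact x hx, ha0, add_zero]
  -- v > 1 on the interval
  have hvgt1 : ∀ x ∈ Set.Ioo 0 x₀, 1 < v x := by
    intro b hb
    have hcont : ContinuousOn v (Set.Icc 0 b) := by
      intro t ht
      rcases eq_or_lt_of_le ht.1 with he | hlt
      · rw [← he]; exact hvc0.continuousWithinAt
      · exact (hvd t ⟨hlt, lt_of_le_of_lt ht.2 hb.2⟩).differentiableAt.continuousAt.continuousWithinAt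
    have hmono : StrictMonoOn v (Set.Icc 0 b) := by
      apply strictMonoOn_of_deriv_pos (convex_Icc 0 b) hcont
      intro t ht
      rw [interior_Icc] at ht
      have htI : t ∈ Set.Ioo 0 x₀ := ⟨ht.1, ht.2.trans hb.2⟩
      rw [hvderiv t htI]
      exact div_pos (hBpos t htI) (pow_pos (hFpos' t htI) 2)
    have := hmono (Set.left_mem_Icc.mpr hb.1.le) (Set.right_mem_Icc.mpr hb.1.le) hb.1
    rwa [hv00] at this
  -- W = (v-1)/(v x) is constant
  set W : ℝ → ℝ := fun t => (v t - 1) / (v t * t) with hWdef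
  clear_value W
  have hWd : ∀ x ∈ Set.Ioo 0 x₀, HasDerivAt W 0 x := by
    intro x hx
    have hvx := hvgt1 x hx
    have hvne : v x * x ≠ 0 := (mul_pos (by linarith) hx.1).ne'
    have hnum := (hvd x hx).sub_const 1
    have hden := (hvd x hx).mul (hasDerivAt_id x)
    have h := hnum.div hden hvne
    rw [hWdef]
    refine h.congr_deriv ?_
    symm
    have hid : x * (B x / F x ^ 2) = (v x - 1) * v x := by
      rw [← hvderiv x hx]; exact hfact2 x hx
    rw [eq_comm, div_eq_zero_iff]
    left
    simp only [id_eq, mul_one, Pi.mul_apply]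
    linear_combination hid
  have hWdiff : ∀ x ∈ Set.Ioo 0 x₀, DifferentiableAt ℝ W x := fun x hx =>
    (hWd x hx).differentiableAt
  have hWderiv : ∀ x ∈ Set.Ioo 0 x₀, deriv W x = 0 := fun x hx => (hWd x hx).deriv
  set C : ℝ := W x₁ with hCdef
  have hCval : C = (v x₁ - 1) / (v x₁ * x₁) := by rw [hCdef, hWdef]
  clear_value C
  have hCpos : 0 < C := by
    rw [hCval]
    exact div_pos (by linarith [hvgt1 x₁ hx₁]) (mul_pos (by linarith [hvgt1 x₁ hx₁]) hx₁.1)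
  have hWconst : ∀ x ∈ Set.Ioo 0 x₀, (v x - 1) / (v x * x) = C := by
    intro x hx
    have h := constOn_Ioo hWdiff hWderiv x hx x₁ hx₁
    simp only [hWdef] at h
    rw [h, hCval]
  have hkey : ∀ x ∈ Set.Ioo 0 x₀, v x * (1 - C * x) = 1 := by
    intro x hx
    have hvx := hvgt1 x hx
    have hvne : v x * x ≠ 0 := (mul_pos (by linarith) hx.1).ne'
    have h := hWconst x hx
    rw [div_eq_iff hvne] at h
    linear_combination h
  have hCx : ∀ x ∈ Set.Ioo 0 x₀, 0 < 1 - C * x := by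
    intro x hx
    have hvx := hvgt1 x hx
    by_contra hcon
    push_neg at hcon
    have h2 : v x * (1 - C * x) ≤ 0 :=
      mul_nonpos_iff.mpr (Or.inl ⟨(by linarith), hcon⟩)
    linarith [hkey x hx]
  have hF₁eq : ∀ x ∈ Set.Ioo 0 x₀, F₁ x = -C * v x * F x := by
    intro x hx
    have h1 := hxF₁ x hx
    have h2 := hkey x hx
    have hx0 : x ≠ 0 := hx.1.ne'
    have : x * F₁ x = x * (-C * v x * F x) := by
      linear_combination h1 + (-F x) * h2
    exact mul_left_cancel₀ hx0 this
  -- Z = F / (1 - C x) is constant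
  set Z : ℝ → ℝ := fun t => F t / (1 - C * t) with hZdef
  clear_value Z
  have hZd : ∀ x ∈ Set.Ioo 0 x₀, HasDerivAt Z 0 x := by
    intro x hx
    have hden : HasDerivAt (fun t => 1 - C * t) (-C) x := by
      simpa using ((hasDerivAt_id x).const_mul C).const_sub 1
    have h := (hdF x hx).div hden (hCx x hx).ne'
    rw [hZdef]
    refine h.congr_deriv ?_
    symm
    rw [eq_comm, div_eq_zero_iff]
    left
    rw [hF₁eq x hx]
    linear_combination (-(C * F x)) * hkey x hx
  have hZdiff : ∀ x ∈ Set.Ioo 0 x₀, DifferentiableAt ℝ Z x := fun x hx =>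
    (hZd x hx).differentiableAt
  have hZderiv : ∀ x ∈ Set.Ioo 0 x₀, deriv Z x = 0 := fun x hx => (hZd x hx).deriv
  set D : ℝ := Z x₁ with hDdef
  have hDval : D = F x₁ / (1 - C * x₁) := by rw [hDdef, hZdef]
  clear_value D
  have hDpos : 0 < D := by
    rw [hDval]
    exact div_pos (hFpos' x₁ hx₁) (hCx x₁ hx₁)
  have hFeq : ∀ x ∈ Set.Ioo 0 x₀, F x = D * (1 - C * x) := by
    intro x hx
    have h := constOn_Ioo hZdiff hZderiv x hx x₁ hx₁
    simp only [hZdef] at h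
    rw [div_eq_iff (hCx x hx).ne'] at h
    rw [h, hDval]
  -- value at 0
  have hF0 : F 0 = D := by
    have h1 : Tendsto F (𝓝[>] (0:ℝ)) (𝓝 (F 0)) := by
      have := (hFc 0 h0mem).tendsto
      refine this.mono_left (nhdsWithin_le_of_mem ?_)
      exact mem_of_superset hIoomem Set.Ioo_subset_Ico_self
    have h2 : Tendsto F (𝓝[>] (0:ℝ)) (𝓝 D) := by
      have hc : Tendsto (fun x => D * (1 - C * x)) (𝓝[>] (0:ℝ)) (𝓝 (D * (1 - C * 0))) := by
        apply Tendsto.mono_left _ nhdsWithin_le_nhds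
        exact ((continuous_const.mul (continuous_const.sub
          (continuous_const.mul continuous_id))).tendsto 0)
      have : D * (1 - C * 0) = D := by ring
      rw [this] at hc
      refine hc.congr' ?_
      filter_upwards [hIoomem] with t ht
      exact (hFeq t ht).symm
    exact tendsto_nhds_unique h1 h2
  refine ⟨D, D * C, hDpos, mul_pos hDpos hCpos, ?_⟩
  intro x hx
  rcases eq_or_lt_of_le hx.1 with he | hlt
  · rw [← he, hF0]; ring
  · rw [hFeq x ⟨hlt, hx.2⟩]; ring
end
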